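/- For each fixed r > 0, l_m(r) → r strictly decreasingly as m ↓ 0, where l_m(r) = 2^{(d−1)/2} Γ((d+1)/2) / (m^{(d+1)/2} ∫_r^∞ u^{(d−3)/2} K_{(d+1)/2}(mu) du). -/

import Mathlib

open Filter

/-- Modified Bessel function of the second kind (Macdonald function) of order `ν`. -/
noncomputable def besselK (ν τ : ℝ) : ℝ :=
  ∫ s in Set.Ioi (0 : ℝ), Real.exp (-τ * Real.cosh s) * Real.cosh (ν * s)

/-- `l_m(r) = 2^{(d−1)/2} Γ((d+1)/2) / (m^{(d+1)/2} ∫_r^∞ u^{(d−3)/2} K_{(d+1)/2}(mu) du)`. -/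
noncomputable def lm (d : ℕ) (m r : ℝ) : ℝ :=
  2 ^ (((d : ℝ) - 1) / 2) * Real.Gamma (((d : ℝ) + 1) / 2) /
    (m ^ (((d : ℝ) + 1) / 2) *
      ∫ u in Set.Ioi r, u ^ (((d : ℝ) - 3) / 2) * besselK (((d : ℝ) + 1) / 2) (m * u))

section Aux
open MeasureTheory Set Real

/-- Auxiliary integral: `G ν τ = ∫₀^∞ e^{-w/2 - τ²/(2w)} w^{ν-1} dw`. -/
noncomputable def Gaux (ν τ : ℝ) : ℝ :=
  ∫ w in Set.Ioi (0 : ℝ), Real.exp (-(w/2) - τ^2/(2*w)) * w ^ (ν - 1)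

lemma Gaux_bound_integrable {ν : ℝ} (hν : 0 < ν) :
    IntegrableOn (fun w : ℝ => Real.exp (-(w/2)) * w ^ (ν - 1)) (Set.Ioi 0) := by
  have h := integrableOn_rpow_mul_exp_neg_mul_rpow (p := 1) (s := ν - 1) (b := 1/2)
    (by linarith) (by norm_num) (by norm_num)
  refine (h.congr_fun (fun x hx => ?_) measurableSet_Ioi)
  simp only [Real.rpow_one]
  ring_nf

lemma Gaux_integrand_cont {ν τ : ℝ} :
    ContinuousOn (fun w : ℝ => Real.exp (-(w/2) - τ^2/(2*w)) * w ^ (ν - 1)) (Set.Ioi 0) := by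
  apply ContinuousOn.mul
  · apply Real.continuous_exp.comp_continuousOn
    apply ContinuousOn.sub
    · exact (by fun_prop : Continuous fun w:ℝ => -(w/2)).continuousOn
    · exact continuousOn_const.div (continuousOn_const.mul continuousOn_id)
        (fun x hx => by simp [ne_of_gt (mem_Ioi.mp hx)])
  · exact fun x hx => (Real.continuousAt_rpow_const x _ (Or.inl (ne_of_gt hx))).continuousWithinAt

lemma Gaux_integrand_integrable {ν : ℝ} (hν : 0 < ν) (τ : ℝ) :
    IntegrableOn (fun w : ℝ => Real.exp (-(w/2) - τ^2/(2*w)) * w ^ (ν - 1)) (Set.Ioi 0) := by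
  refine Integrable.mono' (Gaux_bound_integrable hν)
    (Gaux_integrand_cont.aestronglyMeasurable measurableSet_Ioi) ?_
  filter_upwards [ae_restrict_mem measurableSet_Ioi] with w hw
  have hw0 : (0:ℝ) < w := hw
  have h1 : (0:ℝ) ≤ w ^ (ν - 1) := Real.rpow_nonneg hw0.le _
  rw [Real.norm_eq_abs, abs_of_nonneg (by positivity)]
  apply mul_le_mul_of_nonneg_right _ h1
  apply Real.exp_le_exp.mpr
  have : 0 ≤ τ^2/(2*w) := by positivity
  linarith

lemma pos_setIntegral {f : ℝ → ℝ} {s : Set ℝ} (hs : MeasurableSet s) (hμ : 0 < MeasureTheory.volume s)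
    (hf : ∀ x ∈ s, 0 < f x) (hi : IntegrableOn f s) : 0 < ∫ x in s, f x := by
  rw [setIntegral_pos_iff_support_of_nonneg_ae ?_ hi]
  · exact lt_of_lt_of_le hμ (measure_mono (fun x hx => ⟨(hf x hx).ne', hx⟩))
  · filter_upwards [ae_restrict_mem hs] with x hx; exact (hf x hx).le

lemma Gaux_pos {ν : ℝ} (hν : 0 < ν) (τ : ℝ) : 0 < Gaux ν τ := by
  refine pos_setIntegral measurableSet_Ioi (by simp) (fun w hw => ?_) (Gaux_integrand_integrable hν τ)
  have hw0 : (0:ℝ) < w := hw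
  positivity

lemma Gaux_zero {ν : ℝ} (hν : 0 < ν) : Gaux ν 0 = 2 ^ ν * Real.Gamma ν := by
  have : Gaux ν 0 = ∫ w in Set.Ioi (0:ℝ), w ^ (ν - 1) * Real.exp (-((1/2) * w)) := by
    refine setIntegral_congr_fun measurableSet_Ioi (fun w hw => ?_)
    have : (0:ℝ)^2/(2*w) = 0 := by norm_num
    rw [this, sub_zero]; ring_nf
  rw [this, Real.integral_rpow_mul_exp_neg_mul_Ioi hν (by norm_num)]
  norm_num

lemma Gaux_le_zero {ν : ℝ} (hν : 0 < ν) (τ : ℝ) : Gaux ν τ ≤ Gaux ν 0 := by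
  refine setIntegral_mono_on (Gaux_integrand_integrable hν τ) (Gaux_integrand_integrable hν 0)
    measurableSet_Ioi (fun w hw => ?_)
  have hw0 : (0:ℝ) < w := hw
  have h1 : (0:ℝ) ≤ w ^ (ν - 1) := Real.rpow_nonneg hw0.le _
  apply mul_le_mul_of_nonneg_right _ h1
  apply Real.exp_le_exp.mpr
  have h2 : 0 ≤ τ^2/(2*w) := by positivity
  have h3 : (0:ℝ)^2/(2*w) = 0 := by norm_num
  rw [h3]; linarith

lemma Gaux_strict_anti {ν : ℝ} (hν : 0 < ν) {τ₁ τ₂ : ℝ} (h1 : 0 ≤ τ₁) (h12 : τ₁ < τ₂) :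
    Gaux ν τ₂ < Gaux ν τ₁ := by
  rw [← sub_pos, Gaux, Gaux, ← integral_sub (Gaux_integrand_integrable hν τ₁)
    (Gaux_integrand_integrable hν τ₂)]
  refine pos_setIntegral measurableSet_Ioi (by simp) (fun w hw => ?_)
    ((Gaux_integrand_integrable hν τ₁).sub (Gaux_integrand_integrable hν τ₂))
  have hw0 : (0:ℝ) < w := hw
  have hsq : τ₁^2 < τ₂^2 := by nlinarith
  have : Real.exp (-(w/2) - τ₂^2/(2*w)) < Real.exp (-(w/2) - τ₁^2/(2*w)) := by
    apply Real.exp_lt_exp.mpr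
    have : τ₁^2/(2*w) < τ₂^2/(2*w) := by
      apply div_lt_div_of_pos_right hsq (by positivity)
    linarith
  have hp : (0:ℝ) < w ^ (ν - 1) := Real.rpow_pos_of_pos hw0 _
  nlinarith

lemma Gaux_continuous {ν : ℝ} (hν : 0 < ν) : Continuous (Gaux ν) := by
  refine continuous_of_dominated (bound := fun w => Real.exp (-(w/2)) * w ^ (ν - 1))
    (fun τ => Gaux_integrand_cont.aestronglyMeasurable measurableSet_Ioi) (fun τ => ?_)
    (Gaux_bound_integrable hν) ?_
  · filter_upwards [ae_restrict_mem measurableSet_Ioi] with w hw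
    have hw0 : (0:ℝ) < w := hw
    have h1 : (0:ℝ) ≤ w ^ (ν - 1) := Real.rpow_nonneg hw0.le _
    rw [Real.norm_eq_abs, abs_of_nonneg (by positivity)]
    apply mul_le_mul_of_nonneg_right _ h1
    apply Real.exp_le_exp.mpr
    have : 0 ≤ τ^2/(2*w) := by positivity
    linarith
  · filter_upwards [ae_restrict_mem measurableSet_Ioi] with w hw
    have hw0 : (0:ℝ) < w := hw
    have : Continuous fun τ : ℝ => -(w/2) - τ^2/(2*w) := by fun_prop
    exact ((Real.continuous_exp.comp this).mul continuous_const)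

lemma besselK_rel {ν τ : ℝ} (hν : 0 < ν) (hτ : 0 < τ) :
    Gaux ν τ = 2 * (τ ^ ν * besselK ν τ) := by
  set g : ℝ → ℝ := fun w => Real.exp (-(w/2) - τ^2/(2*w)) * w ^ (ν - 1) with hg
  set φ : ℝ → ℝ := fun s => τ * Real.exp s with hφ
  set F : ℝ → ℝ := fun s => Real.exp (ν * s - τ * Real.cosh s) with hFdef
  have himg : φ '' Set.univ = Set.Ioi 0 := by
    ext x
    simp only [Set.image_univ, Set.mem_range, Set.mem_Ioi, hφ]
    constructor
    · rintro ⟨s, rfl⟩; positivity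
    · intro hx
      exact ⟨Real.log (x / τ), by rw [Real.exp_log (by positivity)]; field_simp⟩
  have hderiv : ∀ s ∈ Set.univ, HasDerivWithinAt φ (τ * Real.exp s) Set.univ s :=
    fun s _ => ((Real.hasDerivAt_exp s).const_mul τ).hasDerivWithinAt
  have hinj : Set.InjOn φ Set.univ := by
    intro a _ b _ hab
    simpa [hφ, hτ.ne'] using hab
  have hpt : ∀ s : ℝ, |τ * Real.exp s| • g (τ * Real.exp s) = τ ^ ν * F s := by
    intro s
    have hes : (0:ℝ) < Real.exp s := Real.exp_pos s
    have habs : |τ * Real.exp s| = τ * Real.exp s := abs_of_pos (by positivity)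
    have e2 : -((τ * Real.exp s)/2) - τ^2/(2*(τ * Real.exp s)) = -(τ * Real.cosh s) := by
      have h : Real.exp s * Real.exp (-s) = 1 := by rw [← Real.exp_add]; simp
      rw [Real.cosh_eq]
      field_simp
      linear_combination h
    have e3 : (τ * Real.exp s) ^ (ν - 1) = τ^(ν-1) * Real.exp (s * (ν - 1)) := by
      rw [Real.mul_rpow hτ.le hes.le, Real.rpow_def_of_pos hes, Real.log_exp]
    have e4 : τ^(ν-1) * τ = τ^ν := by
      rw [← Real.rpow_add_one hτ.ne']; ring_nf
    simp only [hg, hFdef, smul_eq_mul]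
    rw [habs, e2, e3]
    rw [show ν * s - τ * Real.cosh s = s*(ν-1) + s + (-(τ * Real.cosh s)) by ring,
      Real.exp_add, Real.exp_add, ← e4]
    ring
  have hgi : IntegrableOn g (φ '' Set.univ) := by rw [himg]; exact Gaux_integrand_integrable hν τ
  have hFg : Integrable (fun s => τ ^ ν * F s) := by
    have h := (integrableOn_image_iff_integrableOn_abs_deriv_smul MeasurableSet.univ hderiv
      hinj g).mp hgi
    rw [integrableOn_univ] at h
    exact h.congr (Filter.Eventually.of_forall hpt)
  have hτν : (0:ℝ) < τ ^ ν := Real.rpow_pos_of_pos hτ ν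
  have hFint : Integrable F := by
    have h := hFg.const_mul (τ^ν)⁻¹
    refine h.congr (Filter.Eventually.of_forall fun s => ?_)
    simp only []
    rw [inv_mul_cancel_left₀ hτν.ne']
  have hF2 : ∀ s, F (-s) + F s = 2 * (Real.exp (-τ * Real.cosh s) * Real.cosh (ν * s)) := by
    intro s
    simp only [hFdef, Real.cosh_neg]
    rw [show ν * -s - τ * Real.cosh s = (-(ν*s)) + (-(τ * Real.cosh s)) by ring,
      show ν * s - τ * Real.cosh s = (ν*s) + (-(τ * Real.cosh s)) by ring,
      Real.exp_add, Real.exp_add, Real.cosh_eq (ν*s),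
      show -τ * Real.cosh s = -(τ * Real.cosh s) by ring]
    ring
  have hint_eq : ∫ s, F s = 2 * besselK ν τ := by
    rw [← intervalIntegral.integral_Iic_add_Ioi (b := (0:ℝ)) hFint.integrableOn hFint.integrableOn]
    have hIic : ∫ s in Set.Iic (0:ℝ), F s = ∫ s in Set.Ioi (0:ℝ), F (-s) := by
      rw [integral_comp_neg_Ioi]; norm_num
    rw [hIic, ← integral_add (hFint.comp_neg.integrableOn) hFint.integrableOn]
    rw [besselK, ← MeasureTheory.integral_const_mul]
    exact setIntegral_congr_fun measurableSet_Ioi fun s _ => hF2 s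
  calc Gaux ν τ = ∫ w in φ '' Set.univ, g w := by rw [himg]; rfl
    _ = ∫ s in Set.univ, |τ * Real.exp s| • g (φ s) :=
        integral_image_eq_integral_abs_deriv_smul MeasurableSet.univ hderiv hinj g
    _ = ∫ s, τ ^ ν * F s := by
        rw [MeasureTheory.setIntegral_univ]
        exact integral_congr_ae (Filter.Eventually.of_forall hpt)
    _ = τ ^ ν * ∫ s, F s := MeasureTheory.integral_const_mul _ _
    _ = 2 * (τ ^ ν * besselK ν τ) := by rw [hint_eq]; ring

end Aux

open MeasureTheory Set Real

/-- For each fixed `r > 0`, `l_m(r) → r` strictly decreasingly as `m ↓ 0`: the map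
`m ↦ l_m(r)` is strictly increasing on `(0,∞)`, `r < l_m(r)` for every `m > 0`, and
`l_m(r) → r` as `m ↓ 0`. -/
theorem lm_tendsto_strictly_decreasing (d : ℕ) (hd : 1 ≤ d) (r : ℝ) (hr : 0 < r) :
    StrictMonoOn (fun m : ℝ => lm d m r) (Set.Ioi 0) ∧
    (∀ m : ℝ, 0 < m → r < lm d m r) ∧
    Tendsto (fun m : ℝ => lm d m r) (nhdsWithin 0 (Set.Ioi 0)) (nhds r) := by
  set ν : ℝ := ((d:ℝ)+1)/2 with hνdef
  have hν : 0 < ν := by positivity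
  set J : ℝ → ℝ := fun m => ∫ u in Set.Ioi r, u^(-2:ℝ) * Gaux ν (m*u) with hJdef
  have hG0pos : 0 < Gaux ν 0 := Gaux_pos hν 0
  have hGcont := Gaux_continuous hν
  have hbound : IntegrableOn (fun u : ℝ => u^(-2:ℝ) * Gaux ν 0) (Set.Ioi r) :=
    (integrableOn_Ioi_rpow_of_lt (by norm_num) hr).mul_const _
  have hmeas : ∀ m : ℝ, ContinuousOn (fun u : ℝ => u^(-2:ℝ) * Gaux ν (m*u)) (Set.Ioi r) := by
    intro m
    refine ContinuousOn.mul (fun x hx => ?_) ?_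
    · exact (Real.continuousAt_rpow_const x _
        (Or.inl (ne_of_gt (hr.trans hx)))).continuousWithinAt
    · exact (hGcont.comp (by fun_prop : Continuous fun u : ℝ => m * u)).continuousOn
  have hbd : ∀ m : ℝ, ∀ᵐ u ∂(MeasureTheory.volume.restrict (Set.Ioi r)),
      ‖u^(-2:ℝ) * Gaux ν (m*u)‖ ≤ u^(-2:ℝ) * Gaux ν 0 := by
    intro m
    filter_upwards [ae_restrict_mem measurableSet_Ioi] with u hu
    have hu0 : 0 < u := hr.trans hu
    rw [Real.norm_eq_abs, abs_of_nonneg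
      (mul_nonneg (Real.rpow_nonneg hu0.le _) (Gaux_pos hν _).le)]
    exact mul_le_mul_of_nonneg_left (Gaux_le_zero hν _) (Real.rpow_nonneg hu0.le _)
  have hJint : ∀ m : ℝ, IntegrableOn (fun u : ℝ => u^(-2:ℝ) * Gaux ν (m*u)) (Set.Ioi r) :=
    fun m => Integrable.mono' hbound
      ((hmeas m).aestronglyMeasurable measurableSet_Ioi) (hbd m)
  have hInt2 : ∫ u in Set.Ioi r, u^(-2:ℝ) * Gaux ν 0 = Gaux ν 0 / r := by
    rw [MeasureTheory.integral_mul_const, integral_Ioi_rpow_of_lt (by norm_num) hr]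
    norm_num
    rw [Real.rpow_neg_one]
    ring
  have hJpos : ∀ m : ℝ, 0 < J m := by
    intro m
    refine pos_setIntegral measurableSet_Ioi (by simp [hr]) (fun u hu => ?_) (hJint m)
    exact mul_pos (Real.rpow_pos_of_pos (hr.trans hu) _) (Gaux_pos hν _)
  have hJlt : ∀ m : ℝ, 0 < m → J m < Gaux ν 0 / r := by
    intro m hm
    rw [← hInt2, ← sub_pos, ← integral_sub hbound (hJint m)]
    refine pos_setIntegral measurableSet_Ioi (by simp [hr]) (fun u hu => ?_)
      (hbound.sub (hJint m))
    have hu0 : 0 < u := hr.trans hu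
    have h1 : Gaux ν (m*u) < Gaux ν 0 := Gaux_strict_anti hν le_rfl (by positivity)
    have h2 : (0:ℝ) < u^(-2:ℝ) := Real.rpow_pos_of_pos hu0 _
    nlinarith
  have hJanti : ∀ m₁ m₂ : ℝ, 0 < m₁ → m₁ < m₂ → J m₂ < J m₁ := by
    intro m₁ m₂ hm₁ h12
    rw [← sub_pos, hJdef, ← integral_sub (hJint m₁) (hJint m₂)]
    refine pos_setIntegral measurableSet_Ioi (by simp [hr]) (fun u hu => ?_)
      ((hJint m₁).sub (hJint m₂))
    have hu0 : 0 < u := hr.trans hu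
    have h1 : Gaux ν (m₂*u) < Gaux ν (m₁*u) := Gaux_strict_anti hν (by positivity) (by nlinarith)
    have h2 : (0:ℝ) < u^(-2:ℝ) := Real.rpow_pos_of_pos hu0 _
    nlinarith
  have hlm : ∀ m : ℝ, 0 < m → lm d m r = Gaux ν 0 / J m := by
    intro m hm
    have h1 : m ^ ν * ∫ u in Set.Ioi r, u ^ (((d:ℝ)-3)/2) * besselK ν (m*u) = J m / 2 := by
      rw [← MeasureTheory.integral_const_mul]
      have hcg : ∀ u ∈ Set.Ioi r,
          m ^ ν * (u ^ (((d:ℝ)-3)/2) * besselK ν (m*u)) = (u^(-2:ℝ) * Gaux ν (m*u))/2 := by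
        intro u hu
        have hu0 : 0 < u := hr.trans hu
        have hmu : 0 < m*u := by positivity
        have hb := besselK_rel hν hmu
        have hexp : ((d:ℝ)-3)/2 = ν - 2 := by rw [hνdef]; ring
        have h2 : (m*u)^ν = m^ν * u^ν := Real.mul_rpow hm.le hu0.le
        have h3 : u^(ν-(2:ℝ)) = u^ν * u^(-2:ℝ) := by
          rw [← Real.rpow_add hu0]; ring_nf
        rw [hexp, hb, h2, h3] at *
        ring
      rw [setIntegral_congr_fun measurableSet_Ioi hcg, MeasureTheory.integral_div, hJdef]
    have hc : (2:ℝ)^(((d:ℝ)-1)/2) * Real.Gamma ν = Gaux ν 0 / 2 := by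
      rw [Gaux_zero hν, show ((d:ℝ)-1)/2 = ν - 1 from by rw [hνdef]; ring,
        Real.rpow_sub (by norm_num : (0:ℝ) < 2), Real.rpow_one]
      ring
    show (2:ℝ) ^ (((d : ℝ) - 1) / 2) * Real.Gamma (((d : ℝ) + 1) / 2) /
      (m ^ (((d : ℝ) + 1) / 2) *
        ∫ u in Set.Ioi r, u ^ (((d : ℝ) - 3) / 2) * besselK (((d : ℝ) + 1) / 2) (m * u))
        = Gaux ν 0 / J m
    rw [show (((d:ℝ)+1)/2) = ν from hνdef.symm, h1, hc, div_div_div_comm,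
      div_self (two_ne_zero), div_one]
  have hG0r : Gaux ν 0 / (Gaux ν 0 / r) = r := by
    field_simp
  refine ⟨?_, ?_, ?_⟩
  · intro m₁ h₁ m₂ h₂ h₁₂
    simp only
    rw [hlm m₁ (Set.mem_Ioi.mp h₁), hlm m₂ (Set.mem_Ioi.mp h₂)]
    exact div_lt_div_of_pos_left hG0pos (hJpos m₂) (hJanti m₁ m₂ (Set.mem_Ioi.mp h₁) h₁₂)
  · intro m hm
    rw [hlm m hm]
    have := div_lt_div_of_pos_left hG0pos (hJpos m) (hJlt m hm)
    rwa [hG0r] at this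
  · have hJtend : Tendsto J (nhdsWithin 0 (Set.Ioi 0)) (nhds (Gaux ν 0 / r)) := by
      rw [← hInt2]
      refine tendsto_integral_filter_of_dominated_convergence
        (bound := fun u : ℝ => u^(-2:ℝ) * Gaux ν 0)
        (Filter.Eventually.of_forall fun m =>
          (hmeas m).aestronglyMeasurable measurableSet_Ioi)
        (Filter.Eventually.of_forall hbd) hbound ?_
      filter_upwards [ae_restrict_mem measurableSet_Ioi] with u hu
      have h1 : Tendsto (fun m : ℝ => m*u) (nhdsWithin 0 (Set.Ioi 0)) (nhds 0) := by
        have h2 := ((by fun_prop : Continuous fun m : ℝ => m * u).tendsto 0).mono_left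
          (nhdsWithin_le_nhds (s := Set.Ioi (0:ℝ)))
        simpa using h2
      exact tendsto_const_nhds.mul ((hGcont.tendsto 0).comp h1)
    have h2 : Tendsto (fun m => Gaux ν 0 / J m) (nhdsWithin 0 (Set.Ioi 0))
        (nhds (Gaux ν 0 / (Gaux ν 0 / r))) :=
      tendsto_const_nhds.div hJtend (div_pos hG0pos hr).ne'
    rw [hG0r] at h2
    refine h2.congr' ?_
    filter_upwards [self_mem_nhdsWithin] with m hm
    exact (hlm m (Set.mem_Ioi.mp hm)).symm
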